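/- Fix p > 1 and let a be the sequence defined in the context. Then for every integer n ≥ 12: Σ_{k=n}^{2n−1} |a_k − a_{k+3}| ≥ n / (12 · (2n+2)^{1+1/p} · ln(2n+3)). In particular, each k ∈ [n, 2n−1] with k ≡ 3 (mod 6) satisfies |a_k − a_{k+3}| = 1/((k+3)^{1+1/p}·ln(k+4)), and there are at least n/12 such k. -/

import Mathlib

noncomputable section

/-- The sequence from the counterexample: `a_n = 3/(n ln(n+1))` if `n ≡ 1 (mod 3)`;
`a_n = 1/((n−3) ln(n−2)) + 1/(n^{1+1/p} ln(n+1))` if `n ≡ 0 (mod 6)`;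
`a_n = 1/(n ln(n+1))` otherwise. -/
noncomputable def aseq (p : ℝ) (n : ℕ) : ℝ :=
  if n % 3 = 1 then 3 / ((n : ℝ) * Real.log ((n : ℝ) + 1))
  else if n % 6 = 0 then
    1 / (((n : ℝ) - 3) * Real.log ((n : ℝ) - 2)) +
      1 / ((n : ℝ) ^ (1 + 1/p) * Real.log ((n : ℝ) + 1))
  else 1 / ((n : ℝ) * Real.log ((n : ℝ) + 1))

lemma aseq_aux_eq (p : ℝ) (k : ℕ) (h6 : k % 6 = 3) :
    |aseq p k - aseq p (k+3)| =
      1 / (((k : ℝ) + 3) ^ (1 + 1/p) * Real.log ((k : ℝ) + 4)) := by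
  have hk3 : 3 ≤ k := by omega
  simp only [aseq]
  rw [if_neg (by omega : ¬ k % 3 = 1), if_neg (by omega : ¬ k % 6 = 0),
      if_neg (by omega : ¬ (k+3) % 3 = 1), if_pos (by omega : (k+3) % 6 = 0)]
  have hc : ((k+3 : ℕ) : ℝ) = (k:ℝ) + 3 := by push_cast; ring
  rw [hc, show (k:ℝ) + 3 - 3 = (k:ℝ) from by ring,
      show (k:ℝ) + 3 - 2 = (k:ℝ) + 1 from by ring,
      show (k:ℝ) + 3 + 1 = (k:ℝ) + 4 from by ring]
  have hpos : 0 ≤ 1 / (((k : ℝ) + 3) ^ (1 + 1/p) * Real.log ((k : ℝ) + 4)) := by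
    apply div_nonneg zero_le_one
    apply mul_nonneg (Real.rpow_nonneg (by positivity) _)
    apply Real.log_nonneg
    have : (0:ℝ) ≤ (k:ℝ) := Nat.cast_nonneg k
    linarith
  rw [show 1 / ((k:ℝ) * Real.log ((k:ℝ) + 1)) -
      (1 / ((k:ℝ) * Real.log ((k:ℝ) + 1)) +
        1 / (((k : ℝ) + 3) ^ (1 + 1/p) * Real.log ((k : ℝ) + 4))) =
      -(1 / (((k : ℝ) + 3) ^ (1 + 1/p) * Real.log ((k : ℝ) + 4))) from by ring,
    abs_neg, abs_of_nonneg hpos]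

lemma aseq_aux_card (n : ℕ) (hn : 12 ≤ n) :
    (n : ℝ) / 12 ≤
      (((Finset.Icc n (2*n-1)).filter (fun k => k % 6 = 3)).card : ℝ) := by
  set m := n + (9 - n % 6) % 6 with hm
  set t := (n-6)/6 + 1 with ht
  have hcard : t ≤ ((Finset.Icc n (2*n-1)).filter (fun k => k % 6 = 3)).card := by
    have : (Finset.range t).card ≤
        ((Finset.Icc n (2*n-1)).filter (fun k => k % 6 = 3)).card := by
      apply Finset.card_le_card_of_injOn (fun j => m + 6*j)
      · intro j hj
        simp only [Finset.mem_coe, Finset.mem_range] at hj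
        simp only [Finset.mem_coe, Finset.mem_filter, Finset.mem_Icc]
        omega
      · intro a _ b _ hab
        simp only at hab
        omega
    simpa using this
  have hnt : n ≤ 12 * t := by omega
  have h12 : (n : ℝ) ≤ 12 * (((Finset.Icc n (2*n-1)).filter (fun k => k % 6 = 3)).card : ℝ) := by
    have : (n : ℝ) ≤ 12 * (t : ℝ) := by exact_mod_cast hnt
    have h2 : (t : ℝ) ≤ (((Finset.Icc n (2*n-1)).filter (fun k => k % 6 = 3)).card : ℝ) := by
      exact_mod_cast hcard
    linarith
  linarith

theorem statement16 (p : ℝ) (hp : 1 < p) (n : ℕ) (hn : 12 ≤ n) :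
    ((n : ℝ) / (12 * (2*(n : ℝ)+2) ^ (1 + 1/p) * Real.log (2*(n : ℝ)+3)) ≤
      ∑ k ∈ Finset.Icc n (2*n-1), |aseq p k - aseq p (k+3)|) ∧
    (∀ k ∈ Finset.Icc n (2*n-1), k % 6 = 3 →
      |aseq p k - aseq p (k+3)| =
        1 / (((k : ℝ) + 3) ^ (1 + 1/p) * Real.log ((k : ℝ) + 4))) ∧
    ((n : ℝ) / 12 ≤
      (((Finset.Icc n (2*n-1)).filter (fun k => k % 6 = 3)).card : ℝ)) := by
  have hexp : (0:ℝ) ≤ 1 + 1/p := by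
    have : (0:ℝ) < 1/p := by positivity
    linarith
  refine ⟨?_, fun k _ hk6 => aseq_aux_eq p k hk6, aseq_aux_card n hn⟩
  set S := (Finset.Icc n (2*n-1)).filter (fun k => k % 6 = 3) with hS
  have hD : (0:ℝ) < (2*(n:ℝ)+2) ^ (1 + 1/p) * Real.log (2*(n:ℝ)+3) := by
    apply mul_pos (Real.rpow_pos_of_pos (by positivity) _)
    apply Real.log_pos
    have : (12:ℝ) ≤ (n:ℝ) := by exact_mod_cast hn
    linarith
  have hterm : ∀ k ∈ S,
      (1:ℝ) / ((2*(n:ℝ)+2) ^ (1 + 1/p) * Real.log (2*(n:ℝ)+3)) ≤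
        |aseq p k - aseq p (k+3)| := by
    intro k hk
    simp only [hS, Finset.mem_filter, Finset.mem_Icc] at hk
    obtain ⟨⟨hk1, hk2⟩, hk6⟩ := hk
    rw [aseq_aux_eq p k hk6]
    have hk3 : (k:ℝ) + 3 ≤ 2*(n:ℝ)+2 := by
      have : k + 3 ≤ 2*n+2 := by omega
      have := (Nat.cast_le (α := ℝ)).2 this
      push_cast at this
      linarith
    have hk4 : (k:ℝ) + 4 ≤ 2*(n:ℝ)+3 := by linarith
    apply one_div_le_one_div_of_le
    · apply mul_pos (Real.rpow_pos_of_pos (by positivity) _)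
      apply Real.log_pos
      have : (0:ℝ) ≤ (k:ℝ) := Nat.cast_nonneg k
      linarith
    · apply mul_le_mul
      · exact Real.rpow_le_rpow (by positivity) hk3 hexp
      · exact Real.log_le_log (by positivity) hk4
      · apply Real.log_nonneg
        have : (0:ℝ) ≤ (k:ℝ) := Nat.cast_nonneg k
        linarith
      · exact Real.rpow_nonneg (by positivity) _
  calc (n : ℝ) / (12 * (2*(n : ℝ)+2) ^ (1 + 1/p) * Real.log (2*(n : ℝ)+3))
      = ((n:ℝ)/12) * (1 / ((2*(n:ℝ)+2) ^ (1 + 1/p) * Real.log (2*(n:ℝ)+3))) := by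
        field_simp
    _ ≤ (S.card : ℝ) * (1 / ((2*(n:ℝ)+2) ^ (1 + 1/p) * Real.log (2*(n:ℝ)+3))) := by
        apply mul_le_mul_of_nonneg_right (aseq_aux_card n hn)
        positivity
    _ ≤ ∑ k ∈ S, |aseq p k - aseq p (k+3)| := by
        have := Finset.card_nsmul_le_sum S (fun k => |aseq p k - aseq p (k+3)|)
          (1 / ((2*(n:ℝ)+2) ^ (1 + 1/p) * Real.log (2*(n:ℝ)+3))) hterm
        simpa [nsmul_eq_mul] using this
    _ ≤ ∑ k ∈ Finset.Icc n (2*n-1), |aseq p k - aseq p (k+3)| := by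
        apply Finset.sum_le_sum_of_subset_of_nonneg (Finset.filter_subset _ _)
        intro i _ _
        exact abs_nonneg _

end
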